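/- Let n, d be positive integers. Then min over all nonempty subsets T of G = {a ∈ ℤ_{>0}^d : a_1 + ... + a_d = n⌈d/n⌉} of the quantity |I(T)| / (n·|T|) equals ⌈d/n⌉/d, where I(T) = {b ∈ ℤ_{>0}^d : b ≤ a componentwise for some a ∈ T}. -/

import Mathlib

/-- The down-set `I(T) = {b ∈ ℤ_{>0}^d : b ≤ a componentwise for some a ∈ T}`,
with `ℤ_{>0}^d` modeled as functions `Fin d → ℕ` with all values positive. -/
def posDown (d : ℕ) (T : Set (Fin d → ℕ)) : Set (Fin d → ℕ) :=
  {b | (∀ i, 0 < b i) ∧ ∃ a ∈ T, ∀ i, b i ≤ a i}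

/-! Subtracting `1` from every coordinate turns `G` into the monomials of degree
`s = n⌈d/n⌉ - d` in `d` variables and `I(T)` into the order ideal `D` generated by the image of `T`.
If `h_i` counts the monomials of degree `i` in `D`, counting pairs (monomial, variable dividing it)
gives the O-sequence inequality `(i + 1) h_{i+1} ≤ (d + i) h_i`, and an induction on `s` turns it
into `(d + s) h_s ≤ d (h_0 + ⋯ + h_s)`, that is `n⌈d/n⌉ |T| ≤ d |I(T)|`. For `T = G` every `h_i`
is the number `multichoose d i` of all monomials of degree `i`, and the two sides agree. -/

open Finset

theorem add_mul_le_mul_sum_range {d : ℕ} {L : ℕ → ℕ}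
    (hL : ∀ i, (i + 1) * L (i + 1) ≤ (d + i) * L i) (s : ℕ) :
    (d + s) * L s ≤ d * ∑ i ∈ range (s + 1), L i := by
  induction s with
  | zero => simp
  | succ s ih =>
    rw [sum_range_succ, mul_add]
    linarith [hL s]

theorem Nat.mul_sum_range_multichoose (d s : ℕ) :
    d * ∑ i ∈ range (s + 1), d.multichoose i = (d + s) * d.multichoose s := by
  rw [Nat.sum_range_multichoose, Nat.multichoose_eq]
  rcases d with _ | e
  · cases s <;> simp
  · rw [show e + 1 + s - 1 = e + s by omega, show s + (e + 1) = e + s + 1 by omega,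
      show e + 1 + s = e + s + 1 by omega, ← Nat.choose_symm_add, Nat.add_one_mul_choose_eq,
      mul_comm]

theorem Pi.single_one_le_of_ne_zero {ι : Type*} [DecidableEq ι] {c : ι → ℕ} {j : ι}
    (hj : c j ≠ 0) : Pi.single j 1 ≤ c := by
  intro k
  by_cases hk : k = j
  · subst hk
    simpa [Nat.one_le_iff_ne_zero] using hj
  · simp [hk]

section Monomials

variable {ι : Type*} [Fintype ι]

theorem sum_sub_single_one_add_one [DecidableEq ι] {c : ι → ℕ} {j : ι} (hj : c j ≠ 0) :
    ∑ k, (c - Pi.single j 1 : ι → ℕ) k + 1 = ∑ k, c k := by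
  conv_rhs => rw [← tsub_add_cancel_of_le (Pi.single_one_le_of_ne_zero hj)]
  simp [sum_add_distrib]

theorem eq_of_le_of_sum_eq {c a : ι → ℕ} (hca : c ≤ a) (hsum : ∑ k, c k = ∑ k, a k) : c = a :=
  funext fun k => (sum_eq_sum_iff_of_le fun k _ => hca k).1 hsum k (mem_univ k)

variable {D : Finset (ι → ℕ)}

/-- Removing one unit of the `j`-th exponent maps the monomials of degree `i + 1` with positive
`j`-th exponent injectively into those of degree `i`. -/
theorem sum_filter_sum_eq_succ_apply_le (hD : IsLowerSet (D : Set (ι → ℕ))) (i : ℕ) (j : ι) :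
    ∑ c ∈ D with ∑ k, c k = i + 1, c j ≤ ∑ b ∈ D with ∑ k, b k = i, (b j + 1) := by
  classical
  set P := {c ∈ D | ∑ k, c k = i + 1 ∧ c j ≠ 0}
  have hP : ∀ c ∈ P, c ∈ D ∧ ∑ k, c k = i + 1 ∧ c j ≠ 0 := fun c hc => by
    simpa [P] using hc
  calc ∑ c ∈ D with ∑ k, c k = i + 1, c j
      = ∑ c ∈ P, ((c - Pi.single j 1 : ι → ℕ) j + 1) := by
        rw [← sum_filter_ne_zero, filter_filter]
        refine sum_congr rfl fun c hc => ?_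
        have := (hP c hc).2.2
        simp only [Pi.sub_apply, Pi.single_eq_same]
        omega
    _ = ∑ b ∈ P.image (· - Pi.single j 1), (b j + 1) := by
        rw [sum_image]
        intro c hc c' hc' h
        exact tsub_inj_left (Pi.single_one_le_of_ne_zero (hP c hc).2.2)
          (Pi.single_one_le_of_ne_zero (hP c' hc').2.2) h
    _ ≤ ∑ b ∈ D with ∑ k, b k = i, (b j + 1) := by
        refine sum_le_sum_of_subset (image_subset_iff.2 fun c hc => ?_)
        obtain ⟨hcD, hsum, hj⟩ := hP c hc
        have := sum_sub_single_one_add_one hj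
        exact mem_filter.2 ⟨hD tsub_le_self hcD, by omega⟩

theorem succ_mul_card_filter_sum_eq_succ_le (hD : IsLowerSet (D : Set (ι → ℕ))) (i : ℕ) :
    (i + 1) * #{c ∈ D | ∑ k, c k = i + 1}
      ≤ (Fintype.card ι + i) * #{c ∈ D | ∑ k, c k = i} := by
  calc (i + 1) * #{c ∈ D | ∑ k, c k = i + 1}
      = ∑ c ∈ D with ∑ k, c k = i + 1, ∑ k, c k := by
        rw [sum_congr rfl fun c hc => (mem_filter.1 hc).2, sum_const, smul_eq_mul, mul_comm]
    _ = ∑ k, ∑ c ∈ D with ∑ k, c k = i + 1, c k := sum_comm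
    _ ≤ ∑ k, ∑ b ∈ D with ∑ k, b k = i, (b k + 1) :=
        sum_le_sum fun k _ => sum_filter_sum_eq_succ_apply_le hD i k
    _ = ∑ b ∈ D with ∑ k, b k = i, (∑ k, b k + Fintype.card ι) := by
        rw [sum_comm]
        simp [sum_add_distrib]
    _ = (Fintype.card ι + i) * #{c ∈ D | ∑ k, c k = i} := by
        rw [sum_congr rfl fun c hc => by rw [(mem_filter.1 hc).2], sum_const, smul_eq_mul,
          mul_comm, add_comm]

theorem add_mul_card_filter_sum_eq_le (hD : IsLowerSet (D : Set (ι → ℕ))) {s : ℕ}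
    (hDs : ∀ c ∈ D, ∑ k, c k ≤ s) :
    (Fintype.card ι + s) * #{c ∈ D | ∑ k, c k = s} ≤ Fintype.card ι * #D := by
  have hfib : #D = ∑ i ∈ range (s + 1), #{c ∈ D | ∑ k, c k = i} :=
    card_eq_sum_card_fiberwise fun c hc => by simpa [Nat.lt_succ_iff] using hDs c hc
  have hstep := succ_mul_card_filter_sum_eq_succ_le hD
  have := add_mul_le_mul_sum_range (L := fun i => #{c ∈ D | ∑ k, c k = i}) hstep s
  rwa [hfib]

theorem finite_setOf_sum_le (s : ℕ) : {c : ι → ℕ | ∑ k, c k ≤ s}.Finite := by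
  classical
  refine (Set.finite_Iic fun _ => s).subset fun c hc k => ?_
  exact (single_le_sum (fun k _ => Nat.zero_le (c k)) (mem_univ k)).trans hc

theorem add_mul_ncard_le_mul_ncard_lowerClosure {s : ℕ} {S : Set (ι → ℕ)}
    (hS : ∀ c ∈ S, ∑ k, c k = s) :
    (Fintype.card ι + s) * S.ncard ≤ Fintype.card ι * (lowerClosure S : Set (ι → ℕ)).ncard := by
  classical
  have hsum_le : ∀ c ∈ lowerClosure S, ∑ k, c k ≤ s := by
    rintro c ⟨a, haS, hca⟩
    exact (hS a haS) ▸ sum_le_sum fun k _ => hca k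
  have hfin : (lowerClosure S : Set (ι → ℕ)).Finite := (finite_setOf_sum_le s).subset hsum_le
  have hSfin : S.Finite := hfin.subset subset_lowerClosure
  have hlevel : {c ∈ hfin.toFinset | ∑ k, c k = s} = hSfin.toFinset := by
    ext c
    simp only [mem_filter, Set.Finite.mem_toFinset, SetLike.mem_coe, mem_lowerClosure]
    constructor
    · rintro ⟨⟨a, haS, hca⟩, hc⟩
      rwa [eq_of_le_of_sum_eq hca (hc.trans (hS a haS).symm)]
    · exact fun hc => ⟨⟨c, hc, le_rfl⟩, hS c hc⟩
  have hlower : IsLowerSet (hfin.toFinset : Set (ι → ℕ)) := by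
    rw [Set.Finite.coe_toFinset]
    exact (lowerClosure S).lower
  have := add_mul_card_filter_sum_eq_le hlower fun c hc => hsum_le c (hfin.mem_toFinset.1 hc)
  rwa [hlevel, ← Set.ncard_eq_toFinset_card S hSfin, ← Set.ncard_eq_toFinset_card _ hfin] at this

theorem ncard_setOf_sum_eq (s : ℕ) :
    {c : ι → ℕ | ∑ k, c k = s}.ncard = (Fintype.card ι).multichoose s := by
  classical
  rw [← Nat.card_coe_set_eq]
  exact (Nat.card_congr (Sym.equivNatSumOfFintype ι s).symm).trans
    (by rw [Nat.card_eq_fintype_card, Sym.card_sym_eq_multichoose])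

theorem ncard_setOf_sum_le (s : ℕ) :
    {c : ι → ℕ | ∑ k, c k ≤ s}.ncard = ∑ i ∈ range (s + 1), (Fintype.card ι).multichoose i := by
  rw [Set.ncard_eq_toFinset_card _ (finite_setOf_sum_le s),
    card_eq_sum_card_fiberwise (t := range (s + 1)) fun c hc => by simpa [Nat.lt_succ_iff] using hc]
  refine sum_congr rfl fun i hi => ?_
  rw [← ncard_setOf_sum_eq, ← Set.ncard_coe_finset]
  congr 1
  ext c
  simp only [coe_filter, Set.Finite.mem_toFinset, Set.mem_ofPred_eq]
  constructor
  · exact And.right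
  · rintro rfl
    exact ⟨by simpa [Nat.lt_succ_iff] using hi, rfl⟩

theorem lowerClosure_setOf_sum_eq [Nonempty ι] (s : ℕ) :
    (lowerClosure {c : ι → ℕ | ∑ k, c k = s} : Set (ι → ℕ)) = {c | ∑ k, c k ≤ s} := by
  classical
  ext c
  simp only [SetLike.mem_coe, mem_lowerClosure, Set.mem_ofPred_eq]
  constructor
  · rintro ⟨a, rfl, hca⟩
    exact sum_le_sum fun k _ => hca k
  · intro hc
    refine ⟨c + Pi.single (Classical.arbitrary ι) (s - ∑ k, c k), ?_, le_self_add⟩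
    simp [sum_add_distrib]
    omega

end Monomials

def posLevel (d N : ℕ) : Set (Fin d → ℕ) := {a | (∀ i, 0 < a i) ∧ ∑ i, a i = N}

section Shift

variable {d : ℕ} {T : Set (Fin d → ℕ)}

theorem posDown_eq_image_lowerClosure (hT : ∀ a ∈ T, ∀ i, 0 < a i) :
    posDown d T = (· + 1) '' (lowerClosure ((· + 1) ⁻¹' T) : Set (Fin d → ℕ)) := by
  ext b
  simp only [posDown, Set.mem_image, SetLike.mem_coe, mem_lowerClosure, Set.mem_preimage]
  constructor
  · rintro ⟨hb, a, haT, hba⟩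
    refine ⟨b - 1, ⟨a - 1, ?_, tsub_le_tsub_right hba 1⟩, ?_⟩
    · convert haT using 1
      exact funext fun i => Nat.sub_add_cancel (hT a haT i)
    · exact funext fun i => Nat.sub_add_cancel (hb i)
  · rintro ⟨c, ⟨a, haT, hca⟩, rfl⟩
    exact ⟨fun i => Nat.succ_pos (c i), a + 1, haT, fun i => Nat.add_le_add_right (hca i) 1⟩

theorem ncard_preimage_add_one (hT : ∀ a ∈ T, ∀ i, 0 < a i) :
    ((· + 1) ⁻¹' T).ncard = T.ncard :=
  Set.ncard_preimage_of_injective_subset_range (add_left_injective 1) fun a ha =>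
    ⟨a - 1, funext fun i => Nat.sub_add_cancel (hT a ha i)⟩

theorem ncard_posDown (hT : ∀ a ∈ T, ∀ i, 0 < a i) :
    (posDown d T).ncard = (lowerClosure ((· + 1) ⁻¹' T) : Set (Fin d → ℕ)).ncard := by
  rw [posDown_eq_image_lowerClosure hT, Set.ncard_image_of_injective _ (add_left_injective 1)]

theorem preimage_add_one_posLevel (s : ℕ) :
    (· + 1) ⁻¹' posLevel d (d + s) = {c : Fin d → ℕ | ∑ k, c k = s} := by
  ext c
  simp [posLevel, sum_add_distrib]
  omega

theorem ncard_posLevel (s : ℕ) : (posLevel d (d + s)).ncard = d.multichoose s := by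
  rw [← ncard_preimage_add_one fun a ha => ha.1, preimage_add_one_posLevel, ncard_setOf_sum_eq,
    Fintype.card_fin]

theorem add_mul_ncard_le_mul_ncard_posDown {s : ℕ} (hT : T ⊆ posLevel d (d + s)) :
    (d + s) * T.ncard ≤ d * (posDown d T).ncard := by
  have hpos : ∀ a ∈ T, ∀ i, 0 < a i := fun a ha => (hT ha).1
  have hsum : ∀ c ∈ (· + 1) ⁻¹' T, ∑ k, c k = s := fun c hc => by
    have := (hT hc).2
    simp only [Pi.add_apply, Pi.one_apply, sum_add_distrib, sum_const, card_univ,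
      Fintype.card_fin, smul_eq_mul, mul_one] at this
    omega
  have := add_mul_ncard_le_mul_ncard_lowerClosure hsum
  rwa [Fintype.card_fin, ncard_preimage_add_one hpos, ← ncard_posDown hpos] at this

theorem add_mul_ncard_posLevel_eq (hd : 0 < d) (s : ℕ) :
    (d + s) * (posLevel d (d + s)).ncard = d * (posDown d (posLevel d (d + s))).ncard := by
  have := Fin.pos_iff_nonempty.1 hd
  rw [ncard_posDown fun a ha => ha.1, preimage_add_one_posLevel, lowerClosure_setOf_sum_eq,
    ncard_setOf_sum_le, Fintype.card_fin, Nat.mul_sum_range_multichoose, ncard_posLevel]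

end Shift

/-- The dual F-signature of the Veronese subring `V_{n,d}`, combinatorially:
the minimum of `|I(T)| / (n·|T|)` over nonempty subsets `T` of
`G = {a ∈ ℤ_{>0}^d : Σ a_i = n⌈d/n⌉}` equals `⌈d/n⌉/d`. -/
theorem stmt12 (n d : ℕ) (hn : 0 < n) (hd : 0 < d) :
    IsLeast
      {q : ℚ | ∃ T : Set (Fin d → ℕ), T.Nonempty ∧
        T ⊆ {a : Fin d → ℕ | (∀ i, 0 < a i) ∧ ∑ i, a i = n * ((d + n - 1) / n)} ∧
        q = ((posDown d T).ncard : ℚ) / ((n : ℚ) * (T.ncard : ℚ))}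
      ((((d + n - 1) / n : ℕ) : ℚ) / (d : ℚ)) := by
  obtain ⟨s, hs⟩ : ∃ s, n * ((d + n - 1) / n) = d + s := by
    refine Nat.exists_eq_add_of_le ?_
    have := Nat.lt_mul_div_succ (d + n - 1) hn
    rw [mul_add] at this
    omega
  have hnm : (n : ℚ) * ((d + n - 1) / n : ℕ) = d + s := by exact_mod_cast hs
  have hG : 0 < (posLevel d (d + s)).ncard := by
    rw [ncard_posLevel, Nat.multichoose_eq]
    exact Nat.choose_pos (by omega)
  rw [hs]
  refine ⟨⟨posLevel d (d + s), Set.nonempty_of_ncard_ne_zero hG.ne', subset_rfl, ?_⟩, ?_⟩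
  · have heq : ((d + s : ℕ) : ℚ) * (posLevel d (d + s)).ncard
        = d * (posDown d (posLevel d (d + s))).ncard := by
      exact_mod_cast add_mul_ncard_posLevel_eq hd s
    rw [div_eq_div_iff (by positivity) (by positivity)]
    push_cast at heq
    linear_combination (posLevel d (d + s)).ncard * hnm + heq
  · rintro q ⟨T, hTne, hTG, rfl⟩
    have hT : 0 < T.ncard := (Set.ncard_pos (Set.finite_of_ncard_pos hG |>.subset hTG)).2 hTne
    have hle : ((d + s : ℕ) : ℚ) * T.ncard ≤ d * (posDown d T).ncard := by
      exact_mod_cast add_mul_ncard_le_mul_ncard_posDown hTG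
    rw [div_le_div_iff₀ (by positivity) (by positivity)]
    push_cast at hle
    linear_combination T.ncard * hnm + hle
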